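/- There is an absolute constant C with the following property. Let Δ be a finite alphabet, let m ≥ 1, and let h : ℕ → Δ be generated by a Fibonacci-DFAO with at most m states. Then for all integers n ≥ 1 and 0 ≤ c < n there exist a finite alphabet A, a letter a₀ ∈ A, a morphism γ : A → A⁺ (mapping each letter to a nonempty word over A) of size Σ_{a∈A} |γ(a)| ≤ C·m²·n⁴ that is prolongable on a₀ (γ(a₀) begins with a₀ and |γ^k(a₀)| → ∞), an infinite fixed point w : ℕ → A of γ, and a coding τ : A → Δ such that τ(w(i)) = h(n·i + c) for all i ≥ 0. -/

import Mathlib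

/-- The Fibonacci (Zeckendorf) value of a binary word written msd-first:
`[x₁⋯x_ℓ] = Σ_j x_j · F_{ℓ−j+2}`. -/
def fibVal : List Bool → ℕ
  | [] => 0
  | a :: rest => (if a then Nat.fib (rest.length + 2) else 0) + fibVal rest

/-- A binary word is a valid Fibonacci representation if it has no factor `11`. -/
def ValidFib (w : List Bool) : Prop :=
  w.Chain' (fun a b => a = false ∨ b = false)

/-- A deterministic finite automaton with output (DFAO). -/
structure DFAO (α : Type*) (σ : Type*) (Δ : Type*) where
  step : σ → α → σ
  start : σ
  out : σ → Δ

/-- The output of a DFAO on an input word. -/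
def DFAO.eval {α σ Δ : Type*} (M : DFAO α σ Δ) (w : List α) : Δ :=
  M.out (w.foldl M.step M.start)

/-- `h : ℕ → Δ` is generated by a Fibonacci-DFAO with at most `m` states. -/
def FibGeneratedBy {Δ : Type*} (h : ℕ → Δ) (m : ℕ) : Prop :=
  ∃ (σ : Type) (_ : Fintype σ) (M : DFAO Bool σ Δ),
    Fintype.card σ ≤ m ∧ ∀ w : List Bool, ValidFib w → M.eval w = h (fibVal w)

/-- Apply a morphism (given by its action on letters) to a word, by concatenation. -/
def applyMorphism {A : Type*} (γ : A → List A) (w : List A) : List A :=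
  w.flatMap γ

/-- `w : ℕ → A` is an infinite fixed point of the morphism `γ`: the concatenation
`γ(w 0) γ(w 1) γ(w 2) ⋯` spells out `w` itself. -/
def IsFixedPointOf {A : Type*} (γ : A → List A) (w : ℕ → A) : Prop :=
  ∃ ℓ : ℕ → ℕ, ℓ 0 = 0 ∧ (∀ i, ℓ (i + 1) = ℓ i + (γ (w i)).length) ∧
    ∀ i : ℕ, ∀ j : ℕ, (hj : j < (γ (w i)).length) → w (ℓ i + j) = (γ (w i))[j]

/-!
The vertices `y ≥ 1` of the Zeckendorf tree, whose children are `[zeck y · 0]` and, when `zeck y`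
ends in `0`, `[zeck y · 1]`, are numbered consecutively in breadth-first order. Hence the
sequence recording, for each `y`, the state of the automaton on `zeck y`, the last digit and
`y`, `[zeck y · 0]` modulo `n` is a fixed point of a decorated Fibonacci morphism on
`4 m n²` letters. Its `K`-th power, with `2n ≤ F_{K+1}`, has blocks of lengths between `2n` and
`F_{K+2} ≤ 6n`, each containing a position `≡ c (mod n)`. Splitting every letter into as many
letters as its block has such positions, and cutting each expanded block into as many pieces,
gives a morphism of size at most `4 m n² (6n)²` fixing a sequence whose `i`-th letter knows the
state reached on `zeck (n i + c)`.
-/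
open Filter

theorem validFib_iff_isChain {w : List Bool} :
    ValidFib w ↔ w.IsChain (fun a b => a = false ∨ b = false) := Iff.rfl

theorem fibVal_append_singleton (w : List Bool) (b : Bool) :
    fibVal (w ++ [b]) = fibVal (w ++ [false]) + b.toNat := by
  induction w with
  | nil => cases b <;> rfl
  | cons a w ih => simp only [List.cons_append, fibVal, ih, List.length_append,
      List.length_singleton]; omega

theorem fibVal_append_pair (w : List Bool) (b : Bool) :
    fibVal (w ++ [b, false]) = fibVal (w ++ [false]) + fibVal w + 2 * b.toNat := by
  induction w with
  | nil => cases b <;> rfl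
  | cons a w ih =>
    have := Nat.fib_add_two (n := w.length + 2)
    cases a <;> simp only [List.cons_append, fibVal, ih, List.length_append, List.length_cons,
      List.length_nil, if_true, if_false, Bool.false_eq_true] <;> grind

theorem validFib_append_singleton {w : List Bool} {b : Bool} :
    ValidFib (w ++ [b]) ↔ ValidFib w ∧ (b = true → w.getLastD false = false) := by
  cases w using List.reverseRecOn with
  | nil => simp [validFib_iff_isChain]
  | append_singleton w a =>
    simp only [validFib_iff_isChain, List.isChain_append, List.getLast?_append,
      List.getLast?_singleton, List.head?_cons, List.getLastD_concat]
    cases a <;> cases b <;> simp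

theorem ValidFib.append_false {w : List Bool} (h : ValidFib w) : ValidFib (w ++ [false]) :=
  validFib_append_singleton.2 ⟨h, by simp⟩

theorem ValidFib.tail {w : List Bool} (h : ValidFib w) : ValidFib w.tail :=
  List.IsChain.tail h

theorem fibVal_lt_fib : ∀ w : List Bool, ValidFib w → fibVal w < Nat.fib (w.length + 2)
  | [], _ => by simp [fibVal]
  | false :: w, h => by
    have := fibVal_lt_fib w h.tail
    have := Nat.fib_le_fib_succ (n := w.length + 2)
    simp only [fibVal, List.length_cons]; grind
  | [true], _ => by decide
  | true :: false :: w, h => by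
    have := fibVal_lt_fib w h.tail.tail
    have := Nat.fib_add_two (n := w.length + 2)
    have := Nat.fib_add_two (n := w.length + 1)
    simp only [fibVal, List.length_cons]; grind
  | true :: true :: _, h => by simp [validFib_iff_isChain] at h

theorem fib_le_fibVal {w : List Bool} (hw : w.head? = some true) :
    Nat.fib (w.length + 1) ≤ fibVal w := by
  obtain _ | ⟨_ | _, w⟩ := w <;> simp_all [fibVal]

def greedyRep : ℕ → ℕ → List Bool
  | 0, _ => []
  | t + 1, v =>
    if v < Nat.fib (t + 2) then false :: greedyRep t v
    else true :: greedyRep t (v - Nat.fib (t + 2))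

@[simp]
theorem length_greedyRep : ∀ t v, (greedyRep t v).length = t
  | 0, _ => rfl
  | t + 1, v => by unfold greedyRep; split <;> simp [length_greedyRep t]

theorem sub_fib_lt_fib {t v : ℕ} (h : v < Nat.fib (t + 3)) :
    v - Nat.fib (t + 2) < Nat.fib (t + 1) := by
  have : Nat.fib (t + 3) = Nat.fib (t + 1) + Nat.fib (t + 2) := Nat.fib_add_two
  have : 0 < Nat.fib (t + 1) := Nat.fib_pos.2 t.succ_pos
  omega

theorem fibVal_greedyRep : ∀ {t v}, v < Nat.fib (t + 2) → fibVal (greedyRep t v) = v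
  | 0, v, h => by simp_all [greedyRep, fibVal]
  | t + 1, v, h => by
    unfold greedyRep
    split
    · simp [fibVal, fibVal_greedyRep (t := t) (by assumption)]
    · have := (sub_fib_lt_fib h).trans_le Nat.fib_le_fib_succ
      simp only [fibVal, ↓reduceIte, length_greedyRep, fibVal_greedyRep this]
      omega

theorem head?_greedyRep (t v : ℕ) :
    (greedyRep (t + 1) v).head? = some (decide (Nat.fib (t + 2) ≤ v)) := by
  unfold greedyRep
  split <;> simp only [List.head?_cons, Option.some.injEq, false_eq_decide_iff, true_eq_decide_iff,
    not_le] <;> omega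

theorem validFib_greedyRep : ∀ {t v}, v < Nat.fib (t + 2) → ValidFib (greedyRep t v)
  | 0, _, _ => List.isChain_nil
  | t + 1, v, h => by
    unfold greedyRep
    split
    · exact List.isChain_cons.2 ⟨by simp, validFib_greedyRep (by assumption)⟩
    · have hlt := sub_fib_lt_fib h
      refine List.isChain_cons.2
        ⟨fun y hy => Or.inr ?_, validFib_greedyRep (hlt.trans_le Nat.fib_le_fib_succ)⟩
      cases t with
      | zero => simp [greedyRep] at hy
      | succ t =>
        rw [head?_greedyRep] at hy
        simp only [Nat.add_assoc, Nat.reduceAdd, Option.mem_def, Option.some.injEq] at hy hlt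
        simp [← hy, hlt]

theorem greedyRep_fibVal : ∀ w : List Bool, ValidFib w → greedyRep w.length (fibVal w) = w
  | [], _ => rfl
  | a :: w, h => by
    have := fibVal_lt_fib w h.tail
    cases a <;> simp [greedyRep, fibVal, this, greedyRep_fibVal w h.tail]

theorem exists_lt_fib (v : ℕ) : ∃ t, v < Nat.fib (t + 2) :=
  ⟨v, by have := Nat.le_fib_add_one (v + 2); omega⟩

/-- The Zeckendorf representation: the unique valid word without leading zero of value `v`. -/
def zeck (v : ℕ) : List Bool := greedyRep (Nat.find (exists_lt_fib v)) v

theorem fibVal_zeck (v : ℕ) : fibVal (zeck v) = v :=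
  fibVal_greedyRep (Nat.find_spec (exists_lt_fib v))

theorem validFib_zeck (v : ℕ) : ValidFib (zeck v) :=
  validFib_greedyRep (Nat.find_spec (exists_lt_fib v))

theorem zeck_zero : zeck 0 = [] := by
  rw [zeck, (Nat.find_eq_zero _).2 (by decide)]
  rfl

theorem head?_zeck {v : ℕ} (hv : v ≠ 0) : (zeck v).head? = some true := by
  unfold zeck
  obtain ⟨t, ht⟩ : ∃ t, Nat.find (exists_lt_fib v) = t + 1 := by
    refine Nat.exists_eq_add_one.2 (Nat.pos_of_ne_zero fun h => ?_)
    have := Nat.find_spec (exists_lt_fib v)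
    simp_all
  have := Nat.find_min (exists_lt_fib v) (m := t) (by omega)
  rw [ht, head?_greedyRep]
  simpa using this

theorem head?_zeck_ne_false (v : ℕ) : (zeck v).head? ≠ some false := by
  rcases eq_or_ne v 0 with rfl | hv
  · simp [zeck_zero]
  · simp [head?_zeck hv]

theorem zeck_fibVal {w : List Bool} (hw : ValidFib w) (h0 : w.head? ≠ some false) :
    zeck (fibVal w) = w := by
  suffices Nat.find (exists_lt_fib (fibVal w)) = w.length by
    rw [zeck, this, greedyRep_fibVal w hw]
  refine (Nat.find_eq_iff _).2 ⟨fibVal_lt_fib w hw, fun k hk => not_lt.2 ?_⟩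
  obtain _ | ⟨_ | _, w'⟩ := w
  · simp at hk
  · simp at h0
  · exact (Nat.fib_mono (by simpa using hk)).trans (fib_le_fibVal rfl)

theorem length_zeck_mono : Monotone fun v => (zeck v).length := fun _ _ h => by
  simp only [zeck, length_greedyRep]
  exact Nat.find_mono fun t ht => h.trans_lt ht

/-- The children of `y` in the Zeckendorf tree are `zeckShift y` and, if `zeck y` ends in `0`,
`zeckShift y + 1`. -/
def zeckShift (y : ℕ) : ℕ := fibVal (zeck y ++ [false])

def zeckLast (y : ℕ) : Bool := (zeck y).getLastD false

def zeckParent (y : ℕ) : ℕ := fibVal (zeck y).dropLast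

theorem zeckShift_zero : zeckShift 0 = 0 := by
  simp [zeckShift, zeck_zero, fibVal]

theorem zeckLast_zero : zeckLast 0 = false := by
  simp [zeckLast, zeck_zero]

theorem head?_append_ne_false {u : List Bool} (hu : u.head? ≠ some false) (b : Bool)
    (hb : u = [] → b = true) : (u ++ [b]).head? ≠ some false := by
  cases u <;> simp_all

theorem zeck_zeckShift {y : ℕ} (hy : y ≠ 0) : zeck (zeckShift y) = zeck y ++ [false] :=
  zeck_fibVal (validFib_zeck y).append_false
    (head?_append_ne_false (head?_zeck_ne_false y) _ fun h => by simpa [h] using head?_zeck hy)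

theorem zeck_zeckShift_add_one {y : ℕ} (hl : zeckLast y = false) :
    zeck (zeckShift y + 1) = zeck y ++ [true] := by
  rw [zeckShift, ← Bool.toNat_true, ← fibVal_append_singleton]
  exact zeck_fibVal (validFib_append_singleton.2 ⟨validFib_zeck y, fun _ => hl⟩)
    (head?_append_ne_false (head?_zeck_ne_false y) _ fun _ => rfl)

theorem zeckShift_zeckShift (y : ℕ) : zeckShift (zeckShift y) = zeckShift y + y := by
  rcases eq_or_ne y 0 with rfl | hy
  · simp [zeckShift_zero]
  · rw [zeckShift, zeck_zeckShift hy, List.append_assoc, List.singleton_append,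
      fibVal_append_pair, fibVal_zeck, zeckShift]
    rfl

theorem zeckShift_zeckShift_add_one {y : ℕ} (hl : zeckLast y = false) :
    zeckShift (zeckShift y + 1) = zeckShift y + y + 2 := by
  rw [zeckShift, zeck_zeckShift_add_one hl, List.append_assoc, List.singleton_append,
    fibVal_append_pair, fibVal_zeck, zeckShift]
  rfl

theorem zeckLast_zeckShift (y : ℕ) : zeckLast (zeckShift y) = false := by
  rcases eq_or_ne y 0 with rfl | hy
  · simp [zeckShift_zero, zeckLast_zero]
  · rw [zeckLast, zeck_zeckShift hy, List.getLastD_concat]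

theorem zeckLast_zeckShift_add_one {y : ℕ} (hl : zeckLast y = false) :
    zeckLast (zeckShift y + 1) = true := by
  rw [zeckLast, zeck_zeckShift_add_one hl, List.getLastD_concat]

theorem zeckParent_zeckShift (y : ℕ) : zeckParent (zeckShift y) = y := by
  rcases eq_or_ne y 0 with rfl | hy
  · simp [zeckShift_zero, zeckParent, zeck_zero, fibVal]
  · rw [zeckParent, zeck_zeckShift hy, List.dropLast_concat, fibVal_zeck]

theorem zeckParent_zeckShift_add_one {y : ℕ} (hl : zeckLast y = false) :
    zeckParent (zeckShift y + 1) = y := by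
  rw [zeckParent, zeck_zeckShift_add_one hl, List.dropLast_concat, fibVal_zeck]

theorem zeck_eq_zeckParent_append {j : ℕ} (hj : j ≠ 0) :
    zeck j = zeck (zeckParent j) ++ [zeckLast j] := by
  obtain h | ⟨u, b, h⟩ := (zeck j).eq_nil_or_concat'
  · exact absurd (by simpa [h, fibVal] using (fibVal_zeck j).symm) hj
  have hvalid := validFib_zeck j
  have hhead := head?_zeck_ne_false j
  rw [h] at hvalid hhead
  have hu : zeck (fibVal u) = u := by
    refine zeck_fibVal (validFib_append_singleton.1 hvalid).1 fun hu => hhead ?_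
    cases u <;> simp_all
  rw [zeckParent, zeckLast, h, List.dropLast_concat, List.getLastD_concat, hu]

theorem zeckShift_zeckParent_add_zeckLast (j : ℕ) :
    zeckShift (zeckParent j) + (zeckLast j).toNat = j := by
  rcases eq_or_ne j 0 with rfl | hj
  · simp [zeckParent, zeckLast, zeck_zero, fibVal, zeckShift_zero]
  · conv_rhs => rw [← fibVal_zeck j, zeck_eq_zeckParent_append hj]
    rw [fibVal_append_singleton, zeckShift]

theorem zeckLast_zeckParent {j : ℕ} (hj : zeckLast j = true) : zeckLast (zeckParent j) = false := by
  have hj0 : j ≠ 0 := by rintro rfl; simp [zeckLast_zero] at hj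
  have := validFib_zeck j
  rw [zeck_eq_zeckParent_append hj0, validFib_append_singleton] at this
  exact this.2 hj

theorem fibVal_append_false_lt : ∀ {u v : List Bool}, ValidFib u → ValidFib v →
    u.length = v.length → fibVal u < fibVal v → fibVal (u ++ [false]) < fibVal (v ++ [false])
  | [], [], _, _, _, h => absurd h (lt_irrefl _)
  | a :: u, b :: v, hu, hv, hlen, h => by
    simp only [List.length_cons, Nat.add_right_cancel_iff] at hlen
    have hu' := fibVal_lt_fib (u ++ [false]) hu.tail.append_false
    have hv' := fibVal_lt_fib v hv.tail
    have ih := @fibVal_append_false_lt u v hu.tail hv.tail hlen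
    simp only [List.length_append, List.length_singleton, hlen] at hu'
    cases a <;> cases b <;>
      simp only [fibVal, List.cons_append, List.length_append, List.length_singleton, hlen,
        if_true, if_false, Bool.false_eq_true, zero_add] at h ⊢ <;> omega

theorem zeckShift_strictMono : StrictMono zeckShift := by
  intro i j hij
  have hj : j ≠ 0 := by omega
  rcases (length_zeck_mono hij.le).lt_or_eq with hlen | hlen
  · have hi := fibVal_lt_fib _ (validFib_zeck i).append_false
    have hj := fib_le_fibVal (w := zeck j ++ [false]) (by simp [List.head?_append, head?_zeck hj])
    have := Nat.fib_mono
      (show (zeck i).length + 1 + 2 ≤ (zeck j).length + 1 + 1 by simpa using hlen)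
    simp only [List.length_append, List.length_singleton] at hi hj
    exact hi.trans_le (this.trans hj)
  · exact fibVal_append_false_lt (validFib_zeck i) (validFib_zeck j) hlen
      (by rwa [fibVal_zeck, fibVal_zeck])

theorem zeckShift_succ_le (i : ℕ) :
    zeckShift (i + 1) ≤ zeckShift i + if zeckLast i then 1 else 2 := by
  set j := zeckShift i + if zeckLast i then 1 else 2 with hj_def
  have hj := zeckShift_zeckParent_add_zeckLast j
  suffices i + 1 ≤ zeckParent j by
    have := zeckShift_strictMono.monotone this
    omega
  by_contra! hp
  obtain hp | hp := (Nat.le_of_lt_succ hp).lt_or_eq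
  · have := zeckShift_strictMono hp
    have : zeckShift i + 1 ≤ j := by split_ifs at hj_def <;> omega
    have := (zeckLast j).toNat_le
    omega
  · rw [hp] at hj
    cases hl : zeckLast j
    · split_ifs at hj_def <;> simp only [hl, Bool.toNat_false, add_zero] at hj <;> omega
    · have := zeckLast_zeckParent hl
      rw [hp] at this
      simp only [hl, Bool.toNat_true, this, Bool.false_eq_true, ↓reduceIte] at hj hj_def
      omega

/-- Consecutive vertices of the Zeckendorf tree have consecutive blocks of children. -/
theorem zeckShift_succ (i : ℕ) :
    zeckShift (i + 1) = zeckShift i + if zeckLast i then 1 else 2 := by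
  have hlt := zeckShift_strictMono (Nat.lt_add_one i)
  have hle := zeckShift_succ_le i
  cases hi : zeckLast i
  · have h1 := zeckParent_zeckShift (i + 1)
    have h2 := zeckParent_zeckShift_add_one hi
    have : zeckShift (i + 1) ≠ zeckShift i + 1 := fun h => by rw [h, h2] at h1; omega
    simp only [hi] at hle
    simp only [Bool.false_eq_true, if_false] at hle ⊢
    omega
  · simp only [hi, if_true] at hle ⊢
    omega

section Morphism

variable {α β : Type*}

def seqPrefix (w : ℕ → α) (k : ℕ) : List α := (List.range k).map w

@[simp]
theorem length_seqPrefix (w : ℕ → α) (k : ℕ) : (seqPrefix w k).length = k := by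
  simp [seqPrefix]

@[simp]
theorem getElem_seqPrefix (w : ℕ → α) {k i : ℕ} (hi : i < (seqPrefix w k).length) :
    (seqPrefix w k)[i] = w i := by
  simp [seqPrefix]

theorem getElem?_seqPrefix (w : ℕ → α) {k i : ℕ} (hi : i < k) :
    (seqPrefix w k)[i]? = some (w i) := by
  simp [seqPrefix, hi]

theorem seqPrefix_succ (w : ℕ → α) (k : ℕ) : seqPrefix w (k + 1) = seqPrefix w k ++ [w k] := by
  simp [seqPrefix, List.range_succ]

theorem seqPrefix_add (w : ℕ → α) (k m : ℕ) :
    seqPrefix w (k + m) = seqPrefix w k ++ (List.range m).map fun j => w (k + j) := by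
  simp [seqPrefix, List.range_add]

theorem seqPrefix_isPrefix (w : ℕ → α) {k m : ℕ} (h : k ≤ m) : seqPrefix w k <+: seqPrefix w m := by
  rw [List.prefix_iff_eq_take]
  apply List.ext_getElem <;> simp [h]

theorem List.IsPrefix.eq_seqPrefix {u : List α} {w : ℕ → α} {m : ℕ} (h : u <+: seqPrefix w m) :
    u = seqPrefix w u.length :=
  List.ext_getElem (by simp) fun i h₁ _ => by simp [h.getElem h₁]

@[simp]
theorem applyMorphism_nil (γ : α → List α) : applyMorphism γ [] = [] := rfl

@[simp]
theorem applyMorphism_append (γ : α → List α) (u v : List α) :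
    applyMorphism γ (u ++ v) = applyMorphism γ u ++ applyMorphism γ v :=
  List.flatMap_append

@[simp]
theorem applyMorphism_singleton (γ : α → List α) (a : α) : applyMorphism γ [a] = γ a := by
  simp [applyMorphism]

theorem applyMorphism_cons (γ : α → List α) (a : α) (u : List α) :
    applyMorphism γ (a :: u) = γ a ++ applyMorphism γ u :=
  List.flatMap_cons

theorem List.IsPrefix.applyMorphism {u v : List α} (h : u <+: v) (γ : α → List α) :
    _root_.applyMorphism γ u <+: _root_.applyMorphism γ v :=
  h.flatMap γ

theorem length_le_length_flatMap {ρ : α → List β} (hρ : ∀ a, ρ a ≠ []) :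
    ∀ u : List α, u.length ≤ (u.flatMap ρ).length
  | [] => le_rfl
  | a :: u => by
    have := List.length_pos_iff.2 (hρ a)
    have := length_le_length_flatMap hρ u
    simp only [List.flatMap_cons, List.length_append, List.length_cons]
    omega

theorem iterate_applyMorphism_append (γ : α → List α) (k : ℕ) (u v : List α) :
    (applyMorphism γ)^[k] (u ++ v) = (applyMorphism γ)^[k] u ++ (applyMorphism γ)^[k] v := by
  induction k with
  | zero => rfl
  | succ k ih => simp only [Function.iterate_succ_apply', ih, applyMorphism_append]

theorem applyMorphism_iterate (γ : α → List α) (k : ℕ) :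
    applyMorphism (fun a => (applyMorphism γ)^[k] [a]) = (applyMorphism γ)^[k] := by
  funext u
  induction u with
  | nil => simp [applyMorphism, Function.iterate_fixed]
  | cons a u ih =>
    rw [applyMorphism_cons, ih, ← iterate_applyMorphism_append, List.singleton_append]

theorem length_iterate_applyMorphism (γ : α → List α) (k : ℕ) (u : List α) :
    ((applyMorphism γ)^[k] u).length = (u.map fun a => ((applyMorphism γ)^[k] [a]).length).sum := by
  conv_lhs => rw [← applyMorphism_iterate]
  rw [applyMorphism, List.length_flatMap]

theorem eq_map_range_of_applyMorphism_seqPrefix {γ : α → List α} {w : ℕ → α} {L : ℕ → ℕ}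
    (hL : ∀ i, applyMorphism γ (seqPrefix w i) = seqPrefix w (L i)) (i : ℕ) :
    γ (w i) = (List.range (γ (w i)).length).map fun j => w (L i + j) := by
  have h := hL (i + 1)
  rw [seqPrefix_succ, applyMorphism_append, hL i, applyMorphism_singleton] at h
  refine List.ext_getElem (by simp) fun j h₁ _ => ?_
  have hj : L i + j < (seqPrefix w (L (i + 1))).length := by
    rw [← h, List.length_append, length_seqPrefix]; omega
  have := congrArg (·[L i + j]?) h
  simp only [List.getElem?_append_right (by simp : (seqPrefix w (L i)).length ≤ L i + j),
    length_seqPrefix, Nat.add_sub_cancel_left, List.getElem?_eq_getElem h₁,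
    getElem?_seqPrefix _ (by simpa using hj)] at this
  simpa using this

/-- A form of `IsFixedPointOf` (see `MapsPrefixes.isFixedPointOf`) that passes directly to
powers and refinements of `γ`. -/
def MapsPrefixes (γ : α → List α) (w : ℕ → α) : Prop :=
  ∀ p, ∃ q, applyMorphism γ (seqPrefix w p) <+: seqPrefix w q

variable {γ : α → List α} {w : ℕ → α}

theorem MapsPrefixes.isFixedPointOf (h : MapsPrefixes γ w) : IsFixedPointOf γ w := by
  refine ⟨fun i => (applyMorphism γ (seqPrefix w i)).length, by simp [seqPrefix],
    fun i => by simp [seqPrefix_succ], fun i j hj => ?_⟩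
  obtain ⟨q, hq⟩ := h (i + 1)
  have hi : (applyMorphism γ (seqPrefix w i)).length + j <
      (applyMorphism γ (seqPrefix w (i + 1))).length := by
    simp [seqPrefix_succ, hj]
  rw [← getElem_seqPrefix w (hq.length_le.trans_lt' hi), ← hq.getElem hi]
  simp [seqPrefix_succ, List.getElem_append_right]

theorem MapsPrefixes.iterate (h : MapsPrefixes γ w) (k : ℕ) :
    MapsPrefixes (fun a => (applyMorphism γ)^[k] [a]) w := by
  rw [MapsPrefixes, applyMorphism_iterate]
  induction k with
  | zero => exact fun p => ⟨p, by simp⟩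
  | succ k ih =>
    intro p
    obtain ⟨q, hq⟩ := ih p
    obtain ⟨r, hr⟩ := h q
    exact ⟨r, by rw [Function.iterate_succ_apply']; exact (hq.applyMorphism γ).trans hr⟩

theorem MapsPrefixes.head?_eq (h : MapsPrefixes γ w) (hne : γ (w 0) ≠ []) :
    (γ (w 0)).head? = some (w 0) := by
  obtain ⟨q, hq⟩ := h 1
  have hq' : γ (w 0) <+: seqPrefix w q := by simpa [seqPrefix] using hq
  rw [hq'.eq_seqPrefix, List.head?_eq_getElem?, getElem?_seqPrefix _ (List.length_pos_iff.2 hne)]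

theorem tendsto_length_iterate {a : α} (hγ : ∀ a, γ a ≠ []) (ha : (γ a).head? = some a)
    (h2 : 2 ≤ (γ a).length) :
    Tendsto (fun k => ((applyMorphism γ)^[k] [a]).length) atTop atTop := by
  obtain ⟨t, ht⟩ : ∃ t, γ a = a :: t := by
    cases h : γ a <;> simp_all
  have key : ∀ k, ∃ u, (applyMorphism γ)^[k] [a] = a :: u ∧ k ≤ u.length := by
    intro k
    induction k with
    | zero => exact ⟨[], rfl, le_rfl⟩
    | succ k ih =>
      obtain ⟨u, hu, hk⟩ := ih
      refine ⟨t ++ applyMorphism γ u, by simp [Function.iterate_succ_apply', hu,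
        applyMorphism_cons, ht], ?_⟩
      have : u.length ≤ (applyMorphism γ u).length := length_le_length_flatMap hγ u
      have : 1 ≤ t.length := by simp only [ht, List.length_cons] at h2; omega
      simp only [List.length_append]
      omega
  refine tendsto_atTop_mono (fun k => ?_) tendsto_id
  obtain ⟨u, hu, hk⟩ := key k
  simp only [id_eq, hu, List.length_cons]
  omega

end Morphism

section Refinement

variable {α β : Type*} {γ : α → List α} {w : ℕ → α} {ρ : α → List β}

/-- The sequence spelled out by `ρ (w 0) ρ (w 1) ρ (w 2) ⋯`. -/
def refineSeq (ρ : α → List β) (hρ : ∀ a, ρ a ≠ []) (w : ℕ → α) (p : ℕ) : β :=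
  ((seqPrefix w (p + 1)).flatMap ρ)[p]'(by
    simpa using length_le_length_flatMap hρ (seqPrefix w (p + 1)))

theorem seqPrefix_refineSeq (hρ : ∀ a, ρ a ≠ []) (i : ℕ) :
    seqPrefix (refineSeq ρ hρ w) ((seqPrefix w i).flatMap ρ).length =
      (seqPrefix w i).flatMap ρ := by
  refine List.ext_getElem (by simp) fun p hp hp' => ?_
  rw [getElem_seqPrefix, refineSeq]
  rcases le_total (p + 1) i with h | h
  · exact ((seqPrefix_isPrefix w h).flatMap ρ).getElem _
  · exact (((seqPrefix_isPrefix w h).flatMap ρ).getElem hp').symm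

theorem MapsPrefixes.refine (h : MapsPrefixes γ w) (hρ : ∀ a, ρ a ≠ [])
    {δ : β → List β} (hδ : ∀ a, applyMorphism δ (ρ a) = (γ a).flatMap ρ) :
    MapsPrefixes δ (refineSeq ρ hρ w) := by
  have hcomm : ∀ u : List α, applyMorphism δ (u.flatMap ρ) = (applyMorphism γ u).flatMap ρ := by
    intro u
    induction u with
    | nil => rfl
    | cons a u ih => simp [applyMorphism_cons, hδ, ih]
  intro p
  obtain ⟨q, hq⟩ := h p
  have hp : p ≤ ((seqPrefix w p).flatMap ρ).length := by
    simpa using length_le_length_flatMap hρ (seqPrefix w p)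
  refine ⟨((seqPrefix w q).flatMap ρ).length, ?_⟩
  calc applyMorphism δ (seqPrefix (refineSeq ρ hρ w) p)
      <+: applyMorphism δ (seqPrefix (refineSeq ρ hρ w) ((seqPrefix w p).flatMap ρ).length) :=
        (seqPrefix_isPrefix _ hp).applyMorphism δ
    _ = (applyMorphism γ (seqPrefix w p)).flatMap ρ := by rw [seqPrefix_refineSeq hρ, hcomm]
    _ <+: (seqPrefix w q).flatMap ρ := hq.flatMap ρ
    _ = _ := (seqPrefix_refineSeq hρ q).symm

end Refinement

section Splitting

variable {α β : Type*}

/-- Cuts `v` into `k` pieces; the first one is the long one, so that the image of the first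
letter of a fixed point keeps growing. -/
def splitPiece (v : List β) (k j : ℕ) : List β :=
  if j = 0 then v.take (v.length + 1 - k) else (v.drop (v.length - k + j)).take 1

theorem flatMap_range_splitPiece {v : List β} {k : ℕ} (hk : k ≤ v.length) :
    ∀ {m}, 1 ≤ m → m ≤ k → (List.range m).flatMap (splitPiece v k) = v.take (v.length - k + m)
  | 0, h, _ => absurd h (by omega)
  | 1, _, _ => by
    simp only [List.range_one, List.flatMap_cons, splitPiece, ↓reduceIte, List.flatMap_nil,
      List.append_nil]
    congr 1
    omega
  | m + 2, _, hm => by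
    rw [List.range_succ, List.flatMap_append, flatMap_range_splitPiece hk (by omega) (by omega),
      show v.length - k + (m + 2) = v.length - k + (m + 1) + 1 by omega,
      List.take_add (i := v.length - k + (m + 1)) (j := 1),
      List.flatMap_singleton, splitPiece, if_neg (by omega)]

theorem splitPiece_ne_nil {v : List β} {k j : ℕ} (hj : j < k) (hk : k ≤ v.length) :
    splitPiece v k j ≠ [] := by
  rw [← List.length_pos_iff, splitPiece]
  split_ifs <;> simp only [List.length_take, List.length_drop, lt_inf_iff, tsub_pos_iff_lt,
    Order.lt_add_one_iff, Order.lt_one_iff, true_and] <;> omega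

def expandLetter (cnt : α → ℕ) (a : α) : List (Σ a, Fin (cnt a)) := List.ofFn fun j => ⟨a, j⟩

def splitMorphism (cnt : α → ℕ) (v : α → List β) (b : Σ a, Fin (cnt a)) : List β :=
  splitPiece (v b.1) (cnt b.1) b.2

variable {cnt : α → ℕ} {v : α → List β}

theorem flatMap_splitMorphism_expandLetter {a : α} (h₁ : 1 ≤ cnt a) (h : cnt a ≤ (v a).length) :
    (expandLetter cnt a).flatMap (splitMorphism cnt v) = v a := by
  rw [expandLetter, List.ofFn_eq_map, List.flatMap_map]
  conv_lhs => arg 1; change fun j => splitPiece (v a) (cnt a) (j : ℕ)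
  rw [← List.flatMap_map (f := Fin.val) (g := splitPiece (v a) (cnt a)),
    List.map_coe_finRange_eq_range, flatMap_range_splitPiece h h₁ le_rfl]
  simp [h]

theorem sum_length_splitMorphism [Fintype α] (hcnt : ∀ a, 1 ≤ cnt a ∧ cnt a ≤ (v a).length) :
    ∑ b, (splitMorphism cnt v b).length = ∑ a, (v a).length := by
  rw [← Finset.univ_sigma_univ, Finset.sum_sigma]
  refine Finset.sum_congr rfl fun a _ => ?_
  rw [← flatMap_splitMorphism_expandLetter (hcnt a).1 (hcnt a).2, List.length_flatMap,
    expandLetter, List.map_ofFn, List.sum_ofFn]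
  rfl

end Splitting

section Marking

variable {α Δ : Type*} (G : α → List α) (P : α → Bool)

def markCount (a : α) : ℕ := max 1 ((G a).filter P).length

theorem one_le_markCount (a : α) : 1 ≤ markCount G P a := le_max_left _ _

/-- The letter `⟨a, j⟩` is coded by the `j`-th marked letter of `G a`; the default `a` is
never read on letters all of whose images contain a marked letter. -/
def markCoding (f : α → Δ) (b : Σ a, Fin (markCount G P a)) : Δ :=
  f (((G b.1).filter P).getD b.2 b.1)

/-- Every letter `a` is split into one letter per marked letter of `G a`, and `G a`, expanded in
the same way, is cut into as many pieces. -/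
def markedMorphism : (Σ a, Fin (markCount G P a)) → List (Σ a, Fin (markCount G P a)) :=
  splitMorphism (markCount G P) fun a => (G a).flatMap (expandLetter (markCount G P))

theorem expandLetter_markCount_ne_nil (a : α) : expandLetter (markCount G P) a ≠ [] := by
  simpa [expandLetter, ← List.length_pos_iff] using
    Nat.one_le_iff_ne_zero.1 (one_le_markCount G P a)

def markedSeq (W : ℕ → α) : ℕ → Σ a, Fin (markCount G P a) :=
  refineSeq (expandLetter (markCount G P)) (expandLetter_markCount_ne_nil G P) W

variable {G P} {W : ℕ → α}

theorem markCount_le_length {a : α} (ha : G a ≠ []) : markCount G P a ≤ (G a).length :=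
  max_le (List.length_pos_iff.2 ha) (List.length_filter_le _ _)

theorem markCount_le_length_flatMap {a : α} (ha : G a ≠ []) :
    markCount G P a ≤ ((G a).flatMap (expandLetter (markCount G P))).length :=
  (markCount_le_length ha).trans (length_le_length_flatMap (expandLetter_markCount_ne_nil G P) _)

theorem markedMorphism_ne_nil (hG : ∀ a, G a ≠ []) (b : Σ a, Fin (markCount G P a)) :
    markedMorphism G P b ≠ [] :=
  splitPiece_ne_nil b.2.2 (markCount_le_length_flatMap (hG b.1))

theorem sum_length_markedMorphism_le [Fintype α] {B : ℕ} (hG : ∀ a, G a ≠ [])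
    (hB : ∀ a, (G a).length ≤ B) :
    ∑ b, (markedMorphism G P b).length ≤ Fintype.card α * B ^ 2 := by
  rw [markedMorphism, sum_length_splitMorphism fun a =>
      ⟨one_le_markCount G P a, markCount_le_length_flatMap (hG a)⟩,
    sq, ← smul_eq_mul, ← Finset.card_univ]
  refine Finset.sum_le_card_nsmul _ _ _ fun a _ => ?_
  rw [List.length_flatMap]
  refine (List.sum_le_card_nsmul _ B fun x hx => ?_).trans ?_
  · obtain ⟨y, -, rfl⟩ := List.mem_map.1 hx
    simpa [expandLetter] using (markCount_le_length (hG y)).trans (hB y)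
  · simpa using Nat.mul_le_mul_right B (hB a)

theorem MapsPrefixes.markedSeq (hG : ∀ a, G a ≠ []) (hW : MapsPrefixes G W) :
    MapsPrefixes (markedMorphism G P) (markedSeq G P W) :=
  hW.refine (expandLetter_markCount_ne_nil G P) fun a =>
    flatMap_splitMorphism_expandLetter (one_le_markCount G P a) (markCount_le_length_flatMap (hG a))

theorem markedSeq_zero : markedSeq G P W 0 = ⟨W 0, ⟨0, one_le_markCount G P (W 0)⟩⟩ := by
  simp [markedSeq, refineSeq, seqPrefix, expandLetter]

theorem two_le_length_markedMorphism_markedSeq_zero (hG : ∀ a, G a ≠ [])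
    (hW : MapsPrefixes G W) (h2 : 2 ≤ (G (W 0)).length) :
    2 ≤ (markedMorphism G P (markedSeq G P W 0)).length := by
  obtain ⟨t, ht⟩ : ∃ t, G (W 0) = W 0 :: t := by
    have := hW.head?_eq (hG _)
    cases h : G (W 0) <;> simp_all
  have ht' : 1 ≤ t.length := by simp only [ht, List.length_cons] at h2; omega
  have hv : markCount G P (W 0) + t.length ≤
      ((G (W 0)).flatMap (expandLetter (markCount G P))).length := by
    simpa [ht, expandLetter] using length_le_length_flatMap (expandLetter_markCount_ne_nil G P) t
  have := one_le_markCount G P (W 0)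
  rw [markedSeq_zero]
  change 2 ≤ (splitPiece ((G (W 0)).flatMap (expandLetter (markCount G P)))
    (markCount G P (W 0)) 0).length
  rw [splitPiece, if_pos rfl, List.length_take]
  omega

theorem map_markCoding_flatMap_expandLetter (f : α → Δ) :
    ∀ {u : List α}, (∀ x ∈ u, ∃ y ∈ G x, P y) →
      (u.flatMap (expandLetter (markCount G P))).map (markCoding G P f) =
        ((applyMorphism G u).filter P).map f
  | [], _ => rfl
  | a :: u, hu => by
    have hcnt : markCount G P a = ((G a).filter P).length := by
      obtain ⟨y, hy, hPy⟩ := hu a (by simp)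
      exact max_eq_right (List.length_pos_iff.2 (List.ne_nil_of_mem (List.mem_filter.2 ⟨hy, hPy⟩)))
    rw [List.flatMap_cons, List.map_append, applyMorphism_cons, List.filter_append, List.map_append,
      map_markCoding_flatMap_expandLetter f fun x hx => hu x (by simp [hx])]
    congr 1
    refine List.ext_getElem (by simp [expandLetter, hcnt]) fun j h₁ h₂ => ?_
    have hj : j < ((G a).filter P).length := by simpa using h₂
    simp [expandLetter, markCoding, List.getElem?_eq_getElem hj]

theorem markCoding_markedSeq (f : α → Δ) {e : ℕ → ℕ} (hW : MapsPrefixes G W)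
    (hblock : ∀ i, ∃ x ∈ G (W i), P x)
    (he : ∀ m, ∃ k, (seqPrefix W m).filter P = seqPrefix (W ∘ e) k) (p : ℕ) :
    markCoding G P f (markedSeq G P W p) = f (W (e p)) := by
  set u := seqPrefix W (p + 1)
  set ρ := expandLetter (markCount G P)
  have hp : p < (u.flatMap ρ).length := by
    simpa [u] using length_le_length_flatMap (expandLetter_markCount_ne_nil G P) u
  obtain ⟨q, hq⟩ := hW (p + 1)
  obtain ⟨k, hk⟩ := he (applyMorphism G u).length
  have hmark : ∀ x ∈ u, ∃ y ∈ G x, P y := fun x hx => by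
    obtain ⟨i, -, rfl⟩ := List.mem_map.1 hx
    exact hblock i
  have key : (seqPrefix (markedSeq G P W) (u.flatMap ρ).length).map (markCoding G P f) =
      (seqPrefix (W ∘ e) k).map f := by
    rw [markedSeq, seqPrefix_refineSeq (expandLetter_markCount_ne_nil G P),
      map_markCoding_flatMap_expandLetter f hmark, hq.eq_seqPrefix, hk]
  have hk' : p < k := by
    have := congrArg List.length key
    rw [List.length_map, List.length_map, length_seqPrefix, length_seqPrefix] at this
    omega
  have := congrArg (·[p]?) key
  simp only [List.getElem?_map, getElem?_seqPrefix _ hp, getElem?_seqPrefix _ hk'] at this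
  simpa using this

end Marking

section Residues

variable {n c : ℕ}

theorem exists_lt_add_mod_eq (hc : c < n) (a : ℕ) : ∃ j < n, (a + j) % n = c := by
  have hn : 0 < n := by omega
  refine ⟨(c + n - a % n) % n, Nat.mod_lt _ hn, ?_⟩
  have := Nat.div_add_mod a n
  have := Nat.mod_lt a hn
  rw [Nat.add_mod_mod, show a + (c + n - a % n) = c + n * (a / n + 1) by rw [Nat.mul_add]; omega]
  simp [Nat.mod_eq_of_lt hc]

theorem exists_range_filter_mod_eq (hc : c < n) : ∀ m, ∃ k, m ≤ n * k + c ∧ n * k + c < m + n ∧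
    (List.range m).filter (· % n = c) = (List.range k).map (n * · + c)
  | 0 => ⟨0, by simp, by simpa using hc, rfl⟩
  | m + 1 => by
    obtain ⟨k, h₁, h₂, hk⟩ := exists_range_filter_mod_eq hc m
    rw [List.range_succ, List.filter_append, hk]
    by_cases hm : m % n = c
    · have hmk : m = n * k + c := by
        have := Nat.div_add_mod m n
        have e₁ : n * (m / n) ≤ n * k := by omega
        have e₂ : n * k < n * (m / n + 1) := by rw [Nat.mul_add, Nat.mul_one]; omega
        have := Nat.le_of_mul_le_mul_left e₁ (by omega)
        have := Nat.lt_of_mul_lt_mul_left e₂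
        have : m / n = k := by omega
        subst this; omega
      refine ⟨k + 1, by rw [Nat.mul_add]; omega, by rw [Nat.mul_add]; omega, ?_⟩
      simp [List.range_succ, hmk, Nat.mod_eq_of_lt hc]
    · have : m ≠ n * k + c := by rintro rfl; simp [Nat.mod_eq_of_lt hc] at hm
      exact ⟨k, by omega, by omega, by simp [hm]⟩

end Residues

/-- A vertex `y` of the Zeckendorf tree as seen by `M`: whether `y = 0`, the state reached on
`zeck y`, the last digit of `zeck y`, and `y` and `zeckShift y` modulo `n`. -/
@[ext]
structure TreeLetter (σ : Type) (n : ℕ) where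
  isRoot : Bool
  state : σ
  last : Bool
  val : ZMod n
  shiftVal : ZMod n

namespace TreeLetter

variable {σ Δ : Type} {n : ℕ}

def equivProd : TreeLetter σ n ≃ Bool × σ × Bool × ZMod n × ZMod n where
  toFun x := (x.isRoot, x.state, x.last, x.val, x.shiftVal)
  invFun x := ⟨x.1, x.2.1, x.2.2.1, x.2.2.2.1, x.2.2.2.2⟩

instance [Fintype σ] [NeZero n] : Fintype (TreeLetter σ n) := Fintype.ofEquiv _ equivProd.symm

theorem card_eq [Fintype σ] [NeZero n] :
    Fintype.card (TreeLetter σ n) = 4 * Fintype.card σ * n ^ 2 := by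
  rw [Fintype.card_congr equivProd]
  simp only [Fintype.card_prod, Fintype.card_bool, ZMod.card]
  ring

variable (M : DFAO Bool σ Δ)

-- The new shift values come from `zeckShift_zeckShift` and `zeckShift_zeckShift_add_one`.
def zeroChild (x : TreeLetter σ n) : TreeLetter σ n :=
  ⟨false, M.step x.state false, false, x.shiftVal, x.shiftVal + x.val⟩

def oneChild (x : TreeLetter σ n) : TreeLetter σ n :=
  ⟨false, M.step x.state true, true, x.shiftVal + 1, x.shiftVal + x.val + 2⟩

end TreeLetter

section FibonacciTree

variable {σ Δ : Type} {n : ℕ} (M : DFAO Bool σ Δ)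

open TreeLetter

def treeMorphism (x : TreeLetter σ n) : List (TreeLetter σ n) :=
  if x.isRoot then [x, x.oneChild M]
  else if x.last then [x.zeroChild M] else [x.zeroChild M, x.oneChild M]

def treeSeq (y : ℕ) : TreeLetter σ n :=
  ⟨decide (y = 0), (zeck y).foldl M.step M.start, zeckLast y, y, zeckShift y⟩

theorem zeroChild_treeSeq {y : ℕ} (hy : y ≠ 0) :
    (treeSeq M y : TreeLetter σ n).zeroChild M = treeSeq M (zeckShift y) := by
  have := zeckShift_strictMono (Nat.pos_of_ne_zero hy)
  ext <;> simp only [zeroChild, treeSeq, zeck_zeckShift hy, List.foldl_append, List.foldl_cons,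
    List.foldl_nil, zeckLast_zeckShift, zeckShift_zeckShift, Nat.cast_add, false_eq_decide_iff]
  omega

theorem oneChild_treeSeq {y : ℕ} (hl : zeckLast y = false) :
    (treeSeq M y : TreeLetter σ n).oneChild M = treeSeq M (zeckShift y + 1) := by
  ext <;> simp [oneChild, treeSeq, zeck_zeckShift_add_one hl, zeckLast_zeckShift_add_one hl,
    zeckShift_zeckShift_add_one hl]

theorem treeMorphism_treeSeq (y : ℕ) :
    treeMorphism M (treeSeq M y : TreeLetter σ n) =
      (List.range (if zeckLast y then 1 else 2)).map fun j => treeSeq M (zeckShift y + j) := by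
  have hroot : (treeSeq M y : TreeLetter σ n).isRoot = decide (y = 0) := rfl
  have hlast : (treeSeq M y : TreeLetter σ n).last = zeckLast y := rfl
  rw [treeMorphism, hroot, hlast]
  rcases eq_or_ne y 0 with rfl | hy
  · rw [oneChild_treeSeq M zeckLast_zero]
    simp [zeckLast_zero, zeckShift_zero, List.range_succ]
  · cases hl : zeckLast y
    · rw [zeroChild_treeSeq M hy, oneChild_treeSeq M hl]
      simp [hy, List.range_succ]
    · rw [zeroChild_treeSeq M hy]
      simp [hy]

theorem iterate_treeMorphism_seqPrefix (k i : ℕ) :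
    (applyMorphism (treeMorphism M))^[k] (seqPrefix (treeSeq M) i : List (TreeLetter σ n)) =
      seqPrefix (treeSeq M) (zeckShift^[k] i) := by
  induction k generalizing i with
  | zero => rfl
  | succ k ih =>
    rw [Function.iterate_succ_apply, Function.iterate_succ_apply, ← ih]
    congr 1
    induction i with
    | zero => simp [seqPrefix, zeckShift_zero]
    | succ i ih' =>
      rw [seqPrefix_succ, applyMorphism_append, ih', applyMorphism_singleton,
        treeMorphism_treeSeq, zeckShift_succ, seqPrefix_add]

theorem mapsPrefixes_iterate_treeMorphism (k : ℕ) :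
    MapsPrefixes (fun x => (applyMorphism (treeMorphism M))^[k] [x])
      (treeSeq M : ℕ → TreeLetter σ n) :=
  MapsPrefixes.iterate (fun i =>
    ⟨zeckShift i, (iterate_treeMorphism_seqPrefix M 1 i).symm ▸ List.prefix_refl _⟩) k

theorem length_iterate_treeMorphism (k : ℕ) (x : TreeLetter σ n) :
    ((applyMorphism (treeMorphism M))^[k] [x]).length =
      Nat.fib (if !x.isRoot && x.last then k + 1 else k + 2) := by
  induction k generalizing x with
  | zero => cases x.isRoot <;> cases x.last <;> rfl
  | succ k ih =>
    have h3 : Nat.fib (k + 1 + 2) = Nat.fib (k + 2) + Nat.fib (k + 1) :=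
      Nat.fib_add_two.trans (add_comm _ _)
    rw [Function.iterate_succ_apply, applyMorphism_singleton, length_iterate_applyMorphism,
      treeMorphism]
    rcases x with ⟨_ | _, q, _ | _, v, s⟩ <;>
      simp [ih, zeroChild, oneChild, h3]

theorem fib_succ_le_length_iterate_treeMorphism (k : ℕ) (x : TreeLetter σ n) :
    Nat.fib (k + 1) ≤ ((applyMorphism (treeMorphism M))^[k] [x]).length := by
  rw [length_iterate_treeMorphism]
  split_ifs
  exacts [le_rfl, Nat.fib_le_fib_succ]

theorem iterate_treeMorphism_ne_nil (k : ℕ) (x : TreeLetter σ n) :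
    (applyMorphism (treeMorphism M))^[k] [x] ≠ [] :=
  List.ne_nil_of_length_pos <|
    (Nat.fib_pos.2 k.succ_pos).trans_le (fib_succ_le_length_iterate_treeMorphism M k x)

theorem length_iterate_treeMorphism_le (k : ℕ) (x : TreeLetter σ n) :
    ((applyMorphism (treeMorphism M))^[k] [x]).length ≤ Nat.fib (k + 2) := by
  rw [length_iterate_treeMorphism]
  split_ifs
  exacts [Nat.fib_le_fib_succ, le_rfl]

theorem treeSeq_val_eq_iff {c : ℕ} (hc : c < n) (y : ℕ) :
    (treeSeq M y : TreeLetter σ n).val = c ↔ y % n = c := by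
  simp [treeSeq, ZMod.natCast_eq_natCast_iff', Nat.mod_eq_of_lt hc]

theorem exists_filter_val_seqPrefix_treeSeq {c : ℕ} (hc : c < n) (m : ℕ) :
    ∃ k, (seqPrefix (treeSeq M) m : List (TreeLetter σ n)).filter (fun x => x.val = (c : ZMod n)) =
      seqPrefix (treeSeq M ∘ (n * · + c)) k := by
  obtain ⟨k, -, -, hk⟩ := exists_range_filter_mod_eq hc m
  refine ⟨k, ?_⟩
  simp only [seqPrefix, List.filter_map, Function.comp_def, treeSeq_val_eq_iff M hc, hk,
    List.map_map]

theorem exists_mem_iterate_treeMorphism_val_eq {c : ℕ} (hc : c < n) {k : ℕ}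
    (hk : n ≤ Nat.fib (k + 1)) (i : ℕ) :
    ∃ x ∈ (applyMorphism (treeMorphism M))^[k] [(treeSeq M i : TreeLetter σ n)],
      x.val = (c : ZMod n) := by
  set G := fun x : TreeLetter σ n => (applyMorphism (treeMorphism M))^[k] [x]
  have hG := eq_map_range_of_applyMorphism_seqPrefix (γ := G) (L := zeckShift^[k])
    (fun i => by rw [applyMorphism_iterate]; exact iterate_treeMorphism_seqPrefix M k i) i
  obtain ⟨j, hj, hjc⟩ := exists_lt_add_mod_eq hc (zeckShift^[k] i)
  have : n ≤ (G (treeSeq M i)).length := hk.trans (fib_succ_le_length_iterate_treeMorphism M k _)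
  refine ⟨treeSeq M (zeckShift^[k] i + j), ?_, (treeSeq_val_eq_iff M hc _).2 hjc⟩
  change _ ∈ G (treeSeq M i)
  rw [hG]
  exact List.mem_map.2 ⟨j, List.mem_range.2 (by omega), rfl⟩

end FibonacciTree

theorem exists_fib_window {n : ℕ} (hn : 1 ≤ n) :
    ∃ K, 2 * n ≤ Nat.fib (K + 1) ∧ Nat.fib (K + 2) ≤ 6 * n := by
  have hex : ∃ K, 2 * n ≤ Nat.fib (K + 1) :=
    ⟨2 * n + 1, by have := Nat.le_fib_add_one (2 * n + 1 + 1); omega⟩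
  refine ⟨Nat.find hex, Nat.find_spec hex, ?_⟩
  obtain ⟨K, hK⟩ : ∃ K, Nat.find hex = K + 1 := by
    refine Nat.exists_eq_add_one.2 (Nat.pos_of_ne_zero fun h => ?_)
    have := Nat.find_spec hex
    simp only [h, zero_add, Nat.fib_one] at this
    omega
  have := Nat.find_min hex (m := K) (by omega)
  have h3 : Nat.fib (K + 3) = Nat.fib (K + 1) + Nat.fib (K + 2) := Nat.fib_add_two
  have h2 : Nat.fib (K + 2) = Nat.fib K + Nat.fib (K + 1) := Nat.fib_add_two
  have := Nat.fib_le_fib_succ (n := K)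
  rw [hK]
  show Nat.fib (K + 3) ≤ 6 * n
  omega

theorem morphism_size_for_linear_subsequence :
    ∃ C : ℕ, ∀ (Δ : Type) (_ : Fintype Δ) (m : ℕ), 1 ≤ m →
      ∀ h : ℕ → Δ, FibGeneratedBy h m →
        ∀ n c : ℕ, 1 ≤ n → c < n →
          ∃ (A : Type) (instA : Fintype A) (γ : A → List A) (a₀ : A) (w : ℕ → A)
            (τ : A → Δ),
            (∀ a : A, γ a ≠ []) ∧
            (∑ a ∈ @Finset.univ A instA, (γ a).length) ≤ C * m ^ 2 * n ^ 4 ∧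
            (γ a₀).head? = some a₀ ∧
            Filter.Tendsto (fun k => ((applyMorphism γ)^[k] [a₀]).length)
              Filter.atTop Filter.atTop ∧
            w 0 = a₀ ∧ IsFixedPointOf γ w ∧
            ∀ i : ℕ, τ (w i) = h (n * i + c) := by
  refine ⟨144, fun Δ _ m _ h ⟨σ, _, M, hcard, hM⟩ n c hn hc => ?_⟩
  have : NeZero n := ⟨by omega⟩
  obtain ⟨K, hK₁, hK₂⟩ := exists_fib_window hn
  set G : TreeLetter σ n → List (TreeLetter σ n) :=
    fun x => (applyMorphism (treeMorphism M))^[K] [x]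
  set P : TreeLetter σ n → Bool := fun x => x.val = (c : ZMod n)
  have hG : ∀ x, G x ≠ [] := iterate_treeMorphism_ne_nil M K
  have hW : MapsPrefixes G (treeSeq M) := mapsPrefixes_iterate_treeMorphism M K
  have h2 : 2 ≤ (G (treeSeq M 0)).length :=
    (by omega : 2 ≤ 2 * n).trans (hK₁.trans (fib_succ_le_length_iterate_treeMorphism M K _))
  have hδ := markedMorphism_ne_nil (P := P) hG
  have hhead := (hW.markedSeq (P := P) hG).head?_eq (hδ _)
  refine ⟨_, inferInstance, markedMorphism G P, markedSeq G P (treeSeq M) 0,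
    markedSeq G P (treeSeq M), markCoding G P fun x => M.out x.state, hδ, ?_, hhead,
    tendsto_length_iterate hδ hhead (two_le_length_markedMorphism_markedSeq_zero hG hW h2), rfl,
    (hW.markedSeq hG).isFixedPointOf, fun i => ?_⟩
  · refine (sum_length_markedMorphism_le hG (length_iterate_treeMorphism_le M K)).trans ?_
    rw [TreeLetter.card_eq]
    calc 4 * Fintype.card σ * n ^ 2 * Nat.fib (K + 2) ^ 2 ≤ 4 * m * n ^ 2 * (6 * n) ^ 2 := by
          gcongr
      _ = 144 * m * n ^ 4 := by ring
      _ ≤ 144 * m ^ 2 * n ^ 4 := by gcongr; exact Nat.le_self_pow two_ne_zero m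
  · have hblock (i : ℕ) : ∃ x ∈ G (treeSeq M i), P x := by
      simpa [G, P] using exists_mem_iterate_treeMorphism_val_eq M hc (by omega) i
    have hτ := markCoding_markedSeq (fun x => M.out x.state) hW hblock (e := (n * · + c))
      (fun m => by simpa [P] using exists_filter_val_seqPrefix_treeSeq M hc m) i
    rw [hτ]
    exact (hM _ (validFib_zeck _)).trans (congrArg h (fibVal_zeck _))
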